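/- Every Nash equilibrium of a general n-person game satisfies the optimin criterion in the associated (n+1)-person fictitious constant-sum game. Precisely: let I be a finite nonempty set of players with nonempty strategy sets S i and bounded utility functions u i, fix c ∈ ℝ, and define the auxiliary game with player set Option I, where player (some i) has strategy set S i and utility u i evaluated at the restriction of the profile to I, and the fictitious player none has the one-element strategy set and utility equal to c minus the sum of the other players' utilities. If p is a Nash equilibrium of the original game, then the profile of the auxiliary game that agrees with p on I (and assigns the fictitious player its unique strategy) is an optimin point of the auxiliary game. -/

import Mathlib

/-- The deviation set `B₋ᵢ p`. -/
def Dev {I : Type*} [DecidableEq I] {S : I → Type*}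
    (u : ∀ i : I, (∀ j, S j) → ℝ) (i : I) (p : ∀ j, S j) : Set (∀ j, S j) :=
  {q | q i = p i ∧ ∀ j, j ≠ i → (q j = p j ∨ u j (Function.update p j (q j)) > u j p)}

/-- The value of a profile `p` to player `i`. -/
noncomputable def val {I : Type*} [DecidableEq I] {S : I → Type*}
    (u : ∀ i : I, (∀ j, S j) → ℝ) (i : I) (p : ∀ j, S j) : ℝ :=
  sInf (u i '' Dev u i p)

/-- `pbar` is an optimin point: its value vector is Pareto optimal. -/
def IsOptimin {I : Type*} [DecidableEq I] {S : I → Type*}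
    (u : ∀ i : I, (∀ j, S j) → ℝ) (pbar : ∀ j, S j) : Prop :=
  ¬ ∃ p : ∀ j, S j, (∀ i, val u i pbar ≤ val u i p) ∧ ∃ j, val u j pbar < val u j p

/-- Strategy sets of the `(n+1)`-person fictitious game: the fictitious player `none`
has a one-element strategy set. -/
def auxS {I : Type*} (S : I → Type*) : Option I → Type _
  | none => PUnit
  | some i => S i

/-- Utilities of the fictitious game: player `some i` gets `u i` of the restricted profile;
the fictitious player gets `c` minus the sum of the others' utilities, making the game
constant-sum with constant `c`. -/
noncomputable def auxU {I : Type*} [Fintype I] {S : I → Type*}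
    (u : ∀ i : I, (∀ j, S j) → ℝ) (c : ℝ) :
    ∀ o : Option I, (∀ o', auxS S o') → ℝ
  | none => fun q => c - ∑ i, u i (fun j => q (some j))
  | some i => fun q => u i (fun j => q (some j))

/-- The profile of the auxiliary game agreeing with `p` on `I`. -/
def auxP {I : Type*} {S : I → Type*} (p : ∀ j, S j) : ∀ o : Option I, auxS S o
  | none => PUnit.unit
  | some i => p i

/-!
At a Nash equilibrium nobody has a better response, so every deviation set is the singleton
`{p}` and the value of `p` to each player is its utility; hence the values at `p` add up to
the constant `c`. At any other profile `q` each value is at most the utility at `q`, so the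
values at `q` add up to at most `c`. A Pareto improvement of the values at `p` would make the
sum at `q` exceed `c`.
-/

section Game

variable {I : Type*} [DecidableEq I] {S : I → Type*} (u : ∀ i : I, (∀ j, S j) → ℝ)

def IsNash (p : ∀ j, S j) : Prop :=
  ∀ (i : I) (q : S i), u i (Function.update p i q) ≤ u i p

variable {u}

theorem self_mem_Dev (i : I) (p : ∀ j, S j) : p ∈ Dev u i p :=
  ⟨rfl, fun _ _ => Or.inl rfl⟩

theorem Dev_eq_singleton_of_isNash {p : ∀ j, S j} (hp : IsNash u p) (i : I) :
    Dev u i p = {p} := by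
  refine Set.eq_singleton_iff_unique_mem.2
    ⟨self_mem_Dev i p, fun q ⟨hqi, hq⟩ => funext fun j => ?_⟩
  by_cases hji : j = i
  · subst hji; exact hqi
  · exact (hq j hji).resolve_right (hp j (q j)).not_gt

theorem val_eq_of_isNash {p : ∀ j, S j} (hp : IsNash u p) (i : I) : val u i p = u i p := by
  rw [val, Dev_eq_singleton_of_isNash hp, Set.image_singleton, csInf_singleton]

theorem val_le {i : I} (hi : BddBelow (Set.range (u i))) (p : ∀ j, S j) : val u i p ≤ u i p :=
  csInf_le (hi.mono (Set.image_subset_range _ _)) ⟨p, self_mem_Dev i p, rfl⟩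

theorem isOptimin_of_isNash_of_sum_eq [Fintype I] {c : ℝ} (hsum : ∀ q, ∑ i, u i q = c)
    (hbdd : ∀ i, BddBelow (Set.range (u i))) {p : ∀ j, S j} (hp : IsNash u p) :
    IsOptimin u p := by
  rintro ⟨q, hle, j, hlt⟩
  have hlt_sum : ∑ i, val u i p < ∑ i, val u i q :=
    Finset.sum_lt_sum (fun i _ => hle i) ⟨j, Finset.mem_univ j, hlt⟩
  have hq_sum : ∑ i, val u i q ≤ c :=
    (hsum q).symm ▸ Finset.sum_le_sum fun i _ => val_le (hbdd i) q
  have hp_sum : ∑ i, val u i p = c := by simp_rw [val_eq_of_isNash hp, hsum]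
  linarith

end Game

section Fictitious

variable {I : Type*} [Fintype I] {S : I → Type*} (u : ∀ i : I, (∀ j, S j) → ℝ) (c : ℝ)

theorem sum_auxU (q : ∀ o, auxS S o) : ∑ o, auxU u c o q = c := by
  rw [Fintype.sum_option]
  exact sub_add_cancel _ _

variable {u}

theorem bddBelow_range_auxU (hb : ∀ i, ∃ C : ℝ, ∀ p, |u i p| ≤ C) (o : Option I) :
    BddBelow (Set.range (auxU u c o)) := by
  choose C hC using hb
  cases o with
  | none =>
    refine ⟨c - ∑ i, C i, Set.forall_mem_range.2 fun q => sub_le_sub_left ?_ c⟩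
    exact Finset.sum_le_sum fun i _ => (le_abs_self _).trans (hC i _)
  | some i => exact ⟨-C i, Set.forall_mem_range.2 fun q => neg_le_of_abs_le (hC i _)⟩

theorem isNash_auxP [DecidableEq I] {p : ∀ j, S j} (hp : IsNash u p) :
    IsNash (auxU u c) (auxP p) := by
  intro o x
  cases o with
  | none =>
    show c - ∑ i, u i (fun j => Function.update (auxP p) none x (some j)) ≤ c - ∑ i, u i p
    rw [Function.update_comp_eq_of_forall_ne' _ _ fun j => Option.some_ne_none j]
    rfl
  | some i =>
    show u i (fun j => Function.update (auxP p) (some i) x (some j)) ≤ u i p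
    rw [Function.update_comp_eq_of_injective' _ (Option.some_injective I)]
    exact hp i x

end Fictitious

theorem nash_isOptimin_fictitious_general {I : Type*} [Fintype I] [DecidableEq I]
    {S : I → Type*}
    (u : ∀ i : I, (∀ j, S j) → ℝ) (hb : ∀ i, ∃ C : ℝ, ∀ p, |u i p| ≤ C)
    (c : ℝ) (p : ∀ j, S j)
    (hnash : ∀ (i : I) (q : S i), u i (Function.update p i q) ≤ u i p) :
    IsOptimin (auxU u c) (auxP p) :=
  isOptimin_of_isNash_of_sum_eq (sum_auxU u c) (bddBelow_range_auxU c hb) (isNash_auxP c hnash)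

/-- Every Nash equilibrium of a general n-person game is an optimin point of the
associated (n+1)-person fictitious constant-sum game. -/
theorem nash_isOptimin_fictitious {I : Type*} [Fintype I] [Nonempty I] [DecidableEq I]
    {S : I → Type*} [∀ i, Nonempty (S i)]
    (u : ∀ i : I, (∀ j, S j) → ℝ) (hb : ∀ i, ∃ C : ℝ, ∀ p, |u i p| ≤ C)
    (c : ℝ) (p : ∀ j, S j)
    (hnash : ∀ (i : I) (q : S i), u i (Function.update p i q) ≤ u i p) :
    IsOptimin (auxU u c) (auxP p) :=
  nash_isOptimin_fictitious_general u hb c p hnash
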